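/- Let X ~ N(μ, σ²) with σ > 0. For any x > μ, with t = (x − μ)/σ, the tail probability satisfies √(2/π)·exp(−t²/2)/(t + √(t² + 4)) ≤ P(X > x) ≤ √(2/π)·exp(−t²/2)/(t + √(t² + 8/π)). -/

import Mathlib

open MeasureTheory ProbabilityTheory Real Filter Set Topology

/-! With `T(t) = ∫_t^∞ e^{-u²/2} du` and `L_c(t) = e^{-t²/2} (√(t² + c) - t)
= c e^{-t²/2} / (t + √(t² + c))`, the claim is, after standardizing, `L_4 / 2 ≤ T ≤ (π/4) L_{8/π}`
on `[0, ∞)`. All three functions vanish at infinity, so it suffices to control derivatives: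
`T - L_4 / 2` is antitone on all of `ℝ`, while `(π/4) L_{8/π} - T` vanishes at `0` (this is what
fixes the constant `8/π`), increases up to `t₀ = (4 - π) / √(π (π - 2))` and decreases afterwards.
In both cases the sign of the derivative becomes a polynomial inequality once the square root is
squared away. -/

noncomputable def gaussTail (t : ℝ) : ℝ := ∫ u in Ioi t, exp (-u ^ 2 / 2)

noncomputable def millsBound (c t : ℝ) : ℝ := exp (-t ^ 2 / 2) * (√(t ^ 2 + c) - t)

lemma integrable_exp_neg_sq_div_two : Integrable fun u : ℝ ↦ exp (-u ^ 2 / 2) := by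
  convert integrable_exp_neg_mul_sq (b := 1 / 2) one_half_pos using 3
  ring

lemma gaussianReal_map_const_mul_add_const (μ σ : ℝ) :
    (gaussianReal 0 1).map (fun z ↦ σ * z + μ) = gaussianReal μ ⟨σ ^ 2, sq_nonneg σ⟩ := by
  have hcomp : (fun z ↦ σ * z + μ) = (· + μ) ∘ (σ * ·) := rfl
  rw [hcomp, ← Measure.map_map (by fun_prop) (by fun_prop), gaussianReal_map_const_mul,
    gaussianReal_map_add_const]
  simp only [mul_zero, zero_add, mul_one]
  rfl

lemma gaussianReal_zero_one_Ioi_toReal (t : ℝ) :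
    (gaussianReal 0 1 (Ioi t)).toReal = gaussTail t / √(2 * π) := by
  have hpdf (u : ℝ) : gaussianPDFReal 0 1 u = (√(2 * π))⁻¹ * exp (-u ^ 2 / 2) := by
    simp [gaussianPDFReal]
  rw [gaussianReal_apply_eq_integral _ one_ne_zero, ENNReal.toReal_ofReal
    (setIntegral_nonneg measurableSet_Ioi fun u _ ↦ gaussianPDFReal_nonneg 0 1 u)]
  simp_rw [hpdf]
  rw [integral_const_mul, gaussTail, inv_mul_eq_div]

lemma gaussianReal_setOf_lt_toReal (μ x : ℝ) {σ : ℝ} (hσ : 0 < σ) :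
    (gaussianReal μ ⟨σ ^ 2, sq_nonneg σ⟩ {y | x < y}).toReal
      = gaussTail ((x - μ) / σ) / √(2 * π) := by
  have hpre : (fun z ↦ σ * z + μ) ⁻¹' {y | x < y} = Ioi ((x - μ) / σ) := by
    ext z
    simp only [mem_preimage, mem_ofPred_eq, mem_Ioi, div_lt_iff₀ hσ]
    constructor <;> intro h <;> linarith
  rw [← gaussianReal_map_const_mul_add_const, Measure.map_apply (s := {y | x < y}) (by fun_prop)
    measurableSet_Ioi, hpre, gaussianReal_zero_one_Ioi_toReal]

lemma gaussTail_eq_sub_intervalIntegral (t : ℝ) :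
    gaussTail t = gaussTail 0 - ∫ u in (0 : ℝ)..t, exp (-u ^ 2 / 2) := by
  rw [gaussTail, gaussTail, ← intervalIntegral.integral_interval_add_Ioi
    integrable_exp_neg_sq_div_two.integrableOn integrable_exp_neg_sq_div_two.integrableOn,
    intervalIntegral.integral_symm]
  ring

lemma hasDerivAt_gaussTail (t : ℝ) : HasDerivAt gaussTail (-exp (-t ^ 2 / 2)) t := by
  have hcont : Continuous fun u : ℝ ↦ exp (-u ^ 2 / 2) := by fun_prop
  have hint := intervalIntegral.integral_hasDerivAt_right
    integrable_exp_neg_sq_div_two.intervalIntegrable (a := 0) (b := t)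
    hcont.aestronglyMeasurable.stronglyMeasurableAtFilter hcont.continuousAt
  rw [funext gaussTail_eq_sub_intervalIntegral]
  exact hint.const_sub _

lemma tendsto_gaussTail_atTop : Tendsto gaussTail atTop (𝓝 0) := by
  have hint := intervalIntegral_tendsto_integral_Ioi 0
    integrable_exp_neg_sq_div_two.integrableOn tendsto_id
  have h := (tendsto_const_nhds (x := gaussTail 0)).sub hint
  rw [← gaussTail, sub_self] at h
  exact h.congr fun t ↦ (gaussTail_eq_sub_intervalIntegral t).symm

lemma gaussTail_zero : gaussTail 0 = √(π / 2) := by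
  have h := integral_gaussian_Ioi (1 / 2)
  have hfun : (fun u : ℝ ↦ exp (-(1 / 2) * u ^ 2)) = fun u ↦ exp (-u ^ 2 / 2) := by
    ext; ring_nf
  rw [hfun, ← gaussTail] at h
  rw [h, show π / (1 / 2) = 2 ^ 2 * (π / 2) by ring, sqrt_mul (by positivity), sqrt_sq two_pos.le]
  ring

lemma nonneg_of_hasDerivAt_nonpos_of_tendsto_zero {f f' : ℝ → ℝ} {a : ℝ}
    (hf : ∀ u, a ≤ u → HasDerivAt f (f' u) u) (hf' : ∀ u, a < u → f' u ≤ 0)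
    (hlim : Tendsto f atTop (𝓝 0)) : 0 ≤ f a := by
  have hanti : AntitoneOn f (Ici a) :=
    antitoneOn_of_hasDerivWithinAt_nonpos (convex_Ici a)
      (fun u hu ↦ (hf u hu).continuousAt.continuousWithinAt)
      (fun u hu ↦ (hf u (interior_subset hu)).hasDerivWithinAt)
      (fun u hu ↦ hf' u (by rwa [interior_Ici] at hu))
  refine le_of_tendsto hlim ?_
  filter_upwards [eventually_ge_atTop a] with u hu
  exact hanti self_mem_Ici hu hu

lemma nonneg_of_hasDerivAt_of_sign_change {f f' : ℝ → ℝ} {a b t : ℝ}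
    (hf : ∀ u, a ≤ u → HasDerivAt f (f' u) u) (hsign : ∀ u, a < u → (0 ≤ f' u ↔ u ≤ b))
    (ha : 0 ≤ f a) (hlim : Tendsto f atTop (𝓝 0)) (ht : a ≤ t) : 0 ≤ f t := by
  rcases le_or_gt t b with htb | hbt
  · have hmono : MonotoneOn f (Icc a t) :=
      monotoneOn_of_hasDerivWithinAt_nonneg (convex_Icc a t)
        (fun u hu ↦ (hf u hu.1).continuousAt.continuousWithinAt)
        (fun u hu ↦ (hf u (interior_subset hu).1).hasDerivWithinAt)
        (fun u hu ↦ by rw [interior_Icc] at hu; exact (hsign u hu.1).2 (hu.2.le.trans htb))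
    exact ha.trans (hmono (left_mem_Icc.2 ht) (right_mem_Icc.2 ht) ht)
  · refine nonneg_of_hasDerivAt_nonpos_of_tendsto_zero (fun u hu ↦ hf u (ht.trans hu))
      (fun u hu ↦ ?_) hlim
    have hau : a < u := ht.trans_lt hu
    exact (not_le.1 (mt (hsign u hau).1 (not_le.2 (hbt.trans hu)))).le

lemma hasDerivAt_sqrt_sq_add {c : ℝ} (hc : 0 < c) (u : ℝ) :
    HasDerivAt (fun v ↦ √(v ^ 2 + c)) (u / √(u ^ 2 + c)) u := by
  have h := ((hasDerivAt_pow 2 u).add_const c).sqrt (by positivity)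
  convert h using 1
  field_simp
  ring

lemma hasDerivAt_millsBound {c : ℝ} (hc : 0 < c) (u : ℝ) :
    HasDerivAt (millsBound c)
      (exp (-u ^ 2 / 2) * (u / √(u ^ 2 + c) - 1 - u * (√(u ^ 2 + c) - u))) u := by
  have hexp : HasDerivAt (fun v ↦ exp (-v ^ 2 / 2)) (exp (-u ^ 2 / 2) * -u) u := by
    have h : HasDerivAt (fun v : ℝ ↦ -v ^ 2 / 2) (-u) u := by
      refine ((hasDerivAt_pow 2 u).fun_neg.div_const 2).congr_deriv ?_
      norm_num
      ring
    exact h.exp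
  refine (hexp.fun_mul ((hasDerivAt_sqrt_sq_add hc u).fun_sub (hasDerivAt_id' u))).congr_deriv ?_
  ring

lemma hasDerivAt_gaussTail_sub_mul_millsBound (k : ℝ) {c : ℝ} (hc : 0 < c) (u : ℝ) :
    HasDerivAt (fun v ↦ gaussTail v - k * millsBound c v)
      (exp (-u ^ 2 / 2) / √(u ^ 2 + c) *
        (k * u ^ 3 + k * (c - 1) * u - (k * u ^ 2 + 1 - k) * √(u ^ 2 + c))) u := by
  have hs2 : √(u ^ 2 + c) ^ 2 = u ^ 2 + c := sq_sqrt (by positivity)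
  refine ((hasDerivAt_gaussTail u).fun_sub ((hasDerivAt_millsBound hc u).const_mul k)).congr_deriv ?_
  field_simp
  linear_combination (k * u) * hs2

lemma add_sqrt_sq_add_pos {c : ℝ} (hc : 0 < c) (t : ℝ) : 0 < t + √(t ^ 2 + c) := by
  have h := neg_sqrt_lt_of_sq_lt (x := t) (y := t ^ 2 + c) (by linarith)
  linarith

lemma millsBound_eq_div {c : ℝ} (hc : 0 < c) (t : ℝ) :
    millsBound c t = c * exp (-t ^ 2 / 2) / (t + √(t ^ 2 + c)) := by
  have hs2 : √(t ^ 2 + c) ^ 2 = t ^ 2 + c := sq_sqrt (by positivity)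
  rw [millsBound, eq_div_iff (add_sqrt_sq_add_pos hc t).ne']
  linear_combination exp (-t ^ 2 / 2) * hs2

lemma millsBound_nonneg {c : ℝ} (hc : 0 < c) (t : ℝ) : 0 ≤ millsBound c t := by
  have := add_sqrt_sq_add_pos hc t
  rw [millsBound_eq_div hc]
  positivity

lemma tendsto_millsBound_atTop {c : ℝ} (hc : 0 < c) :
    Tendsto (millsBound c) atTop (𝓝 0) := by
  have hexp : Tendsto (fun t : ℝ ↦ exp (-t ^ 2 / 2) * √c) atTop (𝓝 0) := by
    have h : Tendsto (fun t : ℝ ↦ -t ^ 2 / 2) atTop atBot :=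
      (tendsto_neg_atBot_iff.2 (tendsto_pow_atTop two_ne_zero)).atBot_div_const two_pos
    simpa using (tendsto_exp_atBot.comp h).mul_const √c
  refine squeeze_zero' (.of_forall (millsBound_nonneg hc)) ?_ hexp
  filter_upwards [eventually_ge_atTop 0] with t ht
  have hs : √(t ^ 2 + c) ≤ t + √c := by
    rw [sqrt_le_left (by positivity)]
    nlinarith [sq_sqrt hc.le, sqrt_nonneg c]
  exact mul_le_mul_of_nonneg_left (by linarith) (exp_pos _).le

lemma cubic_le_sq_add_one_mul_sqrt (u : ℝ) : u ^ 3 + 3 * u ≤ (u ^ 2 + 1) * √(u ^ 2 + 4) := by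
  have hsq : ((u ^ 2 + 1) * √(u ^ 2 + 4)) ^ 2 = (u ^ 3 + 3 * u) ^ 2 + 4 := by
    rw [mul_pow, sq_sqrt (by positivity)]
    ring
  calc u ^ 3 + 3 * u ≤ |u ^ 3 + 3 * u| := le_abs_self _
    _ ≤ √(((u ^ 2 + 1) * √(u ^ 2 + 4)) ^ 2) := abs_le_sqrt (by rw [hsq]; linarith)
    _ = (u ^ 2 + 1) * √(u ^ 2 + 4) := sqrt_sq (by positivity)

lemma sub_cubic_nonneg_iff {u : ℝ} (hu : 0 ≤ u) :
    0 ≤ (π * u ^ 2 + 4 - π) * √(u ^ 2 + 8 / π) - (π * u ^ 3 + (8 - π) * u) ↔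
      u ^ 2 * (π * (π - 2)) ≤ (4 - π) ^ 2 := by
  have hs2 : √(u ^ 2 + 8 / π) ^ 2 = u ^ 2 + 8 / π := sq_sqrt (by positivity)
  have hdiff : ((π * u ^ 2 + 4 - π) * √(u ^ 2 + 8 / π)) ^ 2 - (π * u ^ 3 + (8 - π) * u) ^ 2
      = 8 / π * ((4 - π) ^ 2 - u ^ 2 * (π * (π - 2))) := by
    rw [mul_pow, hs2]
    field_simp
    ring
  have hQ : 0 ≤ (π * u ^ 2 + 4 - π) * √(u ^ 2 + 8 / π) :=
    mul_nonneg (by nlinarith [pi_pos, pi_lt_four]) (sqrt_nonneg _)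
  have hR : 0 ≤ π * u ^ 3 + (8 - π) * u := by nlinarith [pi_pos, pi_lt_four, pow_nonneg hu 3]
  rw [sub_nonneg, ← pow_le_pow_iff_left₀ hR hQ two_ne_zero, ← sub_nonneg, hdiff,
    mul_nonneg_iff_of_pos_left (by positivity), sub_nonneg]

lemma two_mul_exp_div_le_gaussTail (t : ℝ) :
    2 * exp (-t ^ 2 / 2) / (t + √(t ^ 2 + 4)) ≤ gaussTail t := by
  have hlim : Tendsto (fun v ↦ gaussTail v - 1 / 2 * millsBound 4 v) atTop (𝓝 0) := by
    simpa only [mul_zero, sub_zero] using tendsto_gaussTail_atTop.sub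
      ((tendsto_millsBound_atTop four_pos).const_mul (1 / 2))
  have h := nonneg_of_hasDerivAt_nonpos_of_tendsto_zero (a := t)
    (fun u _ ↦ hasDerivAt_gaussTail_sub_mul_millsBound (1 / 2) four_pos u)
    (fun u _ ↦ mul_nonpos_of_nonneg_of_nonpos (by positivity)
      (by linarith [cubic_le_sq_add_one_mul_sqrt u])) hlim
  calc 2 * exp (-t ^ 2 / 2) / (t + √(t ^ 2 + 4)) = 1 / 2 * millsBound 4 t := by
        rw [millsBound_eq_div four_pos]; ring
    _ ≤ gaussTail t := by linarith

lemma gaussTail_le_two_mul_exp_div {t : ℝ} (ht : 0 ≤ t) :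
    gaussTail t ≤ 2 * exp (-t ^ 2 / 2) / (t + √(t ^ 2 + 8 / π)) := by
  have hπ : 0 < π := pi_pos
  have hπ2 : 0 < π * (π - 2) := mul_pos hπ (by linarith [pi_gt_three])
  have hc : 0 < 8 / π := by positivity
  have hderiv (u : ℝ) : HasDerivAt (fun v ↦ π / 4 * millsBound (8 / π) v - gaussTail v)
      (exp (-u ^ 2 / 2) / (4 * √(u ^ 2 + 8 / π)) *
        ((π * u ^ 2 + 4 - π) * √(u ^ 2 + 8 / π) - (π * u ^ 3 + (8 - π) * u))) u := by
    have h := (hasDerivAt_gaussTail_sub_mul_millsBound (π / 4) hc u).fun_neg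
    simp only [neg_sub] at h
    refine h.congr_deriv ?_
    field_simp
    ring
  have hlim : Tendsto (fun v ↦ π / 4 * millsBound (8 / π) v - gaussTail v) atTop (𝓝 0) := by
    simpa only [mul_zero, sub_zero] using
      ((tendsto_millsBound_atTop hc).const_mul (π / 4)).sub tendsto_gaussTail_atTop
  have hzero : π / 4 * millsBound (8 / π) 0 - gaussTail 0 = 0 := by
    rw [gaussTail_zero, millsBound, show π / 2 = (π / 4) ^ 2 * (8 / π) by field_simp; ring,
      sqrt_mul (by positivity), sqrt_sq (by positivity)]
    simp
  have h := nonneg_of_hasDerivAt_of_sign_change (a := 0) (b := √((4 - π) ^ 2 / (π * (π - 2))))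
    (fun u _ ↦ hderiv u)
    (fun u hu ↦ by rw [mul_nonneg_iff_of_pos_left (by positivity), sub_cubic_nonneg_iff hu.le,
      le_sqrt hu.le (by positivity), le_div_iff₀ hπ2])
    hzero.ge hlim ht
  calc gaussTail t ≤ π / 4 * millsBound (8 / π) t := by linarith
    _ = 2 * exp (-t ^ 2 / 2) / (t + √(t ^ 2 + 8 / π)) := by
      rw [millsBound_eq_div hc]; field_simp; ring

/-- Two-sided tail bounds for a non-standard Gaussian `X ~ N(μ, σ²)`, `σ > 0`:
for `x > μ` and `t = (x − μ)/σ`,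
`√(2/π) e^{−t²/2}/(t + √(t²+4)) ≤ P(X > x) ≤ √(2/π) e^{−t²/2}/(t + √(t²+8/π))`. -/
theorem stmt9 (μ σ x : ℝ) (hσ : 0 < σ) (hx : μ < x) :
    Real.sqrt (2 / π) * Real.exp (-(((x - μ) / σ) ^ 2) / 2) /
        ((x - μ) / σ + Real.sqrt (((x - μ) / σ) ^ 2 + 4)) ≤
      (gaussianReal μ ⟨σ ^ 2, sq_nonneg σ⟩ {y | x < y}).toReal ∧
    (gaussianReal μ ⟨σ ^ 2, sq_nonneg σ⟩ {y | x < y}).toReal ≤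
      Real.sqrt (2 / π) * Real.exp (-(((x - μ) / σ) ^ 2) / 2) /
        ((x - μ) / σ + Real.sqrt (((x - μ) / σ) ^ 2 + 8 / π)) := by
  rw [gaussianReal_setOf_lt_toReal μ x hσ]
  set t := (x - μ) / σ
  have ht : 0 < t := div_pos (sub_pos.2 hx) hσ
  have hscale (d : ℝ) :
      √(2 / π) * exp (-t ^ 2 / 2) / d = 2 * exp (-t ^ 2 / 2) / d / √(2 * π) := by
    have h : √(2 / π) * √(2 * π) = 2 := by
      rw [← sqrt_mul (by positivity), show 2 / π * (2 * π) = 2 ^ 2 by field_simp,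
        sqrt_sq two_pos.le]
    rw [eq_div_iff (by positivity)]
    linear_combination exp (-t ^ 2 / 2) / d * h
  rw [hscale, hscale]
  exact ⟨div_le_div_of_nonneg_right (two_mul_exp_div_le_gaussTail t) (sqrt_nonneg _),
    div_le_div_of_nonneg_right (gaussTail_le_two_mul_exp_div ht.le) (sqrt_nonneg _)⟩
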